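/- arXiv:1012.3348 — 6 statements merged into one kernel-verified Lean document; each statement's English description precedes it below -/
import Mathlib

section
/- Let A be a Banach algebra, B a Banach A-bimodule, n ≥ 2 an even integer, 0 ≤ r ≤ n/2, and φ ∈ U_{n,r}. Then φ belongs to the left topological center Z^ℓ_{B^(n)}(U_{n,r}) if and only if for every b^(n-1) ∈ B^(n-1) the functional b^(n-1)φ on B^(n), defined by ⟨b^(n-1)φ, b^(n)⟩ = ⟨b^(n-1), φ b^(n)⟩ for b^(n) ∈ B^(n), is weak*-continuous on B^(n), i.e. b^(n-1)φ lies in the canonical image of B^(n-1) inside B^(n+1). -/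
/-!
Common infrastructure for formalizing "Topological centers of the n-th dual of
module actions" (Haghnejad Azar, Riazi).

We work over `ℝ`.  A Banach algebra is a complete `NonUnitalNormedRing` which is
a normed `ℝ`-algebra; a Banach `A`-bimodule `B` is given by two continuous
bilinear module actions `πl : A →L B →L B`, `πr : B →L A →L B` satisfying the
usual associativity identities.

`BB` bundles a normed `ℝ`-space.  `BB.dual` is the topological dual,
`BB.bst` is the Arens adjoint `m ↦ m^*` of a bounded bilinear map
(`⟨m^*(z',x), y⟩ = ⟨z', m(x,y)⟩`), `BB.arens m = m^{***}` is the first Arens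
extension, `BB.diter E k` is the `2k`-th dual of `E`, and `BB.iterBil m k` is
the `k`-fold iterated first Arens extension of `m` acting on `2k`-th duals.

Even integers `n ≥ 0` (resp. `n ≥ 2`) are represented as `n = 2*k`
(resp. `n = 2*(j+1)`), so that `A^{(n)}` is `Ad A k`, `A^{(n+1)}` is
`((BB.of A).diter k).dual.carrier`, etc.

Weak-star and weak convergence of nets are expressed through filters
(`wsTendsto`, `wTendsto`), and the relevant topological centers and `wap`
spaces become the predicates `MemZlBA`, `MemZlAB`, `MemWapL` below.
-/

noncomputable section

/-- A bundled normed real vector space. -/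
structure BB : Type 1 where
  carrier : Type
  [grp : NormedAddCommGroup carrier]
  [mod : NormedSpace ℝ carrier]

attribute [instance] BB.grp BB.mod

open ContinuousLinearMap Filter Topology Bornology

/-- Bundle a normed space. -/
abbrev BB.of (X : Type) [NormedAddCommGroup X] [NormedSpace ℝ X] : BB := ⟨X⟩

/-- The (topological) dual space. -/
abbrev BB.dual (E : BB) : BB := ⟨E.carrier →L[ℝ] ℝ⟩

/-- Bounded bilinear maps `E × F → G`. -/
abbrev BB.Bil (E F G : BB) : Type := E.carrier →L[ℝ] F.carrier →L[ℝ] G.carrier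

/-- The Arens adjoint `m^*` of a bounded bilinear map `m : X × Y → Z`:
`⟨m^*(z', x), y⟩ = ⟨z', m(x, y)⟩`. -/
def BB.bst {E F G : BB} (m : BB.Bil E F G) : BB.Bil G.dual E F.dual :=
  ((ContinuousLinearMap.compL ℝ E.carrier (F.carrier →L[ℝ] G.carrier)
      (F.carrier →L[ℝ] ℝ)).flip m).comp
    (ContinuousLinearMap.compL ℝ F.carrier G.carrier ℝ)

/-- The first Arens extension `m^{***} = ((m^*)^*)^*` of a bounded bilinear map. -/
def BB.arens {E F G : BB} (m : BB.Bil E F G) :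
    BB.Bil E.dual.dual F.dual.dual G.dual.dual :=
  BB.bst (BB.bst (BB.bst m))

/-- The canonical embedding of a normed space into its double dual. -/
def BB.incl (E : BB) : E.carrier →L[ℝ] E.dual.dual.carrier :=
  (ContinuousLinearMap.id ℝ (E.carrier →L[ℝ] ℝ)).flip

/-- The adjoint of a continuous linear map. -/
def BB.adj {E F : BB} (f : E.carrier →L[ℝ] F.carrier) :
    F.dual.carrier →L[ℝ] E.dual.carrier :=
  (ContinuousLinearMap.compL ℝ E.carrier F.carrier ℝ).flip f

/-- `E.diter k` is the `2k`-th dual of `E`. -/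
@[reducible] def BB.diter (E : BB) : ℕ → BB
  | 0 => E
  | k + 1 => ((BB.diter E k).dual).dual

/-- The `k`-fold iterated first Arens extension of `m` to the `2k`-th duals. -/
@[reducible] def BB.iterBil {E F G : BB} (m : BB.Bil E F G) :
    ∀ k : ℕ, BB.Bil (E.diter k) (F.diter k) (G.diter k)
  | 0 => m
  | k + 1 => BB.arens (BB.iterBil m k)

/-- Weak-star convergence of a net of functionals (nets are encoded as maps
together with a filter on the index type). -/
def wsTendsto {E : BB} {ι : Type} (l : Filter ι) (f : ι → E.dual.carrier)
    (g : E.dual.carrier) : Prop :=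
  ∀ x : E.carrier, Tendsto (fun i => f i x) l (𝓝 (g x))

/-- Weak convergence of a net. -/
def wTendsto {E : BB} {ι : Type} (l : Filter ι) (f : ι → E.carrier)
    (g : E.carrier) : Prop :=
  ∀ ψ : E.dual.carrier, Tendsto (fun i => ψ (f i)) l (𝓝 (ψ g))

/-- A set is relatively weakly compact if its closure in the weak topology is
compact. -/
def RelWeaklyCompact {E : BB} (s : Set E.carrier) : Prop :=
  IsCompact (closure (toWeakSpace ℝ E.carrier '' s))

section Setup

variable (A B : Type) [NonUnitalNormedRing A] [NormedSpace ℝ A] [IsScalarTower ℝ A A]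
  [SMulCommClass ℝ A A] [NormedAddCommGroup B] [NormedSpace ℝ B]

/-- `A^{(2k)}`, the `2k`-th dual of `A`. -/
abbrev Ad (k : ℕ) : Type := ((BB.of A).diter k).carrier

/-- `B^{(2k)}`, the `2k`-th dual of `B`. -/
abbrev Bd (k : ℕ) : Type := ((BB.of B).diter k).carrier

variable (πl : A →L[ℝ] B →L[ℝ] B) (πr : B →L[ℝ] A →L[ℝ] B)

/-- The iterated (first Arens extension of the) left module action
`A^{(2k)} × B^{(2k)} → B^{(2k)}`. -/
abbrev actL (k : ℕ) :
    ((BB.of A).diter k).carrier →L[ℝ] ((BB.of B).diter k).carrier →L[ℝ]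
      ((BB.of B).diter k).carrier :=
  BB.iterBil (E := BB.of A) (F := BB.of B) (G := BB.of B) πl k

/-- The iterated (first Arens extension of the) right module action
`B^{(2k)} × A^{(2k)} → B^{(2k)}`. -/
abbrev actR (k : ℕ) :
    ((BB.of B).diter k).carrier →L[ℝ] ((BB.of A).diter k).carrier →L[ℝ]
      ((BB.of B).diter k).carrier :=
  BB.iterBil (E := BB.of B) (F := BB.of A) (G := BB.of B) πr k

/-- The iterated first Arens product on `A^{(2k)}`. -/
abbrev mulA (k : ℕ) :
    ((BB.of A).diter k).carrier →L[ℝ] ((BB.of A).diter k).carrier →L[ℝ]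
      ((BB.of A).diter k).carrier :=
  BB.iterBil (E := BB.of A) (F := BB.of A) (G := BB.of A) (ContinuousLinearMap.mul ℝ A) k

/-- `a ∈ Z^ℓ_{B^{(2k+2)}}(A^{(2k+2)})`: the map `b ↦ a b` on `B^{(2k+2)}` is
weak-star to weak-star continuous. -/
def MemZlBA (k : ℕ) (a : Ad A (k + 1)) : Prop :=
  ∀ {ι : Type} (l : Filter ι), l.NeBot →
    ∀ (bα : ι → Bd B (k + 1)) (b : Bd B (k + 1)),
      wsTendsto (E := ((BB.of B).diter k).dual) l bα b →
      wsTendsto (E := ((BB.of B).diter k).dual) l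
        (fun i => actL A B πl (k + 1) a (bα i)) (actL A B πl (k + 1) a b)

/-- `b ∈ Z^ℓ_{A^{(2k+2)}}(B^{(2k+2)})`: the map `a ↦ b a` from `A^{(2k+2)}` to
`B^{(2k+2)}` is weak-star to weak-star continuous. -/
def MemZlAB (k : ℕ) (b : Bd B (k + 1)) : Prop :=
  ∀ {ι : Type} (l : Filter ι), l.NeBot →
    ∀ (aα : ι → Ad A (k + 1)) (a : Ad A (k + 1)),
      wsTendsto (E := ((BB.of A).diter k).dual) l aα a →
      wsTendsto (E := ((BB.of B).diter k).dual) l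
        (fun i => actR A B πr (k + 1) b (aα i)) (actR A B πr (k + 1) b a)

/-- `b1 ∈ wap_ℓ(B^{(2k)}) ⊆ B^{(2k+1)}`:
`⟨b2 ⬝ aα, b1⟩ → ⟨b2 ⬝ a2, b1⟩` whenever `aα → a2` weak-star in `A^{(2k+2)}`. -/
def MemWapL (k : ℕ) (b1 : ((BB.of B).diter k).dual.carrier) : Prop :=
  ∀ (b2 : Bd B (k + 1)),
    ∀ {ι : Type} (l : Filter ι), l.NeBot →
      ∀ (aα : ι → Ad A (k + 1)) (a2 : Ad A (k + 1)),
        wsTendsto (E := ((BB.of A).diter k).dual) l aα a2 →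
        Tendsto (fun i => actR A B πr (k + 1) b2 (aα i) b1) l
          (𝓝 (actR A B πr (k + 1) b2 a2 b1))

end Setup

theorem BB.exists_incl_eq_of_continuous {E : BB} (f : E.dual.dual.carrier)
    (hf : Continuous fun ψ : WeakDual ℝ E.carrier => f ψ) : ∃ x, BB.incl E x = f := by
  obtain ⟨x, hx⟩ :=
    LinearMap.dualEmbedding_surjective (topDualPairing ℝ E.carrier) ⟨f.toLinearMap, hf⟩
  exact ⟨x, ContinuousLinearMap.ext fun ψ => DFunLike.congr_fun hx ψ⟩

theorem BB.continuous_weakDual_of_wsTendsto {E F : BB}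
    (T : E.dual.carrier →L[ℝ] F.dual.carrier)
    (hT : ∀ {ι : Type} (l : Filter ι), l.NeBot → ∀ (f : ι → E.dual.carrier) (g : E.dual.carrier),
      wsTendsto l f g → wsTendsto l (fun i => T (f i)) (T g)) :
    Continuous fun ψ : WeakDual ℝ E.carrier => StrongDual.toWeakDual (T ψ) :=
  WeakDual.continuous_of_continuous_eval fun y => continuous_iff_continuousAt.2 fun ψ =>
    hT (𝓝 ψ) inferInstance _ _ (fun x => (WeakDual.eval_continuous x).tendsto ψ) y

theorem BB.wsTendsto_map_iff_exists_incl_eq {E : BB} (T : E.dual.carrier →L[ℝ] E.dual.carrier) :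
    (∀ {ι : Type} (l : Filter ι), l.NeBot → ∀ (f : ι → E.dual.carrier) (g : E.dual.carrier),
        wsTendsto l f g → wsTendsto l (fun i => T (f i)) (T g)) ↔
      ∀ x : E.carrier, ∃ y : E.carrier, BB.incl E y = (BB.incl E x).comp T := by
  constructor
  · intro hT x
    exact BB.exists_incl_eq_of_continuous _
      ((WeakDual.eval_continuous x).comp (BB.continuous_weakDual_of_wsTendsto T hT))
  · intro hT ι l _ f g hfg x
    obtain ⟨y, hy⟩ := hT x
    have hTy : ∀ ψ, T ψ x = ψ y := fun ψ => (DFunLike.congr_fun hy ψ).symm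
    simpa only [hTy] using hfg y

/-- Here `n = 2 * (j + 1)`, and `U_{n,r}` is modelled by a subset `U` of `A^{(n)}` acting on
`B^{(n)}` through the iterated first Arens extension of the left module action. -/
theorem stmt0_general
    (A B : Type) [NonUnitalNormedRing A] [NormedSpace ℝ A]
    [NormedAddCommGroup B] [NormedSpace ℝ B]
    (πl : A →L[ℝ] B →L[ℝ] B)
    (j : ℕ)
    (U : Set (Ad A (j + 1)))
    (φ : Ad A (j + 1)) (hφ : φ ∈ U) :
    (φ ∈ U ∧ MemZlBA A B πl j φ) ↔
      ∀ bm : ((BB.of B).diter j).dual.carrier,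
        ∃ bm' : ((BB.of B).diter j).dual.carrier,
          BB.incl ((BB.of B).diter j).dual bm' =
            (BB.incl ((BB.of B).diter j).dual bm).comp (actL A B πl (j + 1) φ) :=
  (and_iff_right hφ).trans (BB.wsTendsto_map_iff_exists_incl_eq _)

/-- (`n = 2*(j+1) ≥ 2` even, `0 ≤ r ≤ n/2 = j+1`.)
`B^{(n)}` is a Banach `U_{n,r}`-bimodule; since the paper realizes `U_{n,r}`
(which is `(A^{(n-r)}A^{(r)})^{(r)}` for `r` even and `(A^{(n-r)}A^{(r-1)})^{(r)}`
for `r` odd) as a subalgebra of `A^{(n)}`, acting on `B^{(n)}` via the iterated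
first Arens extension of the module action, we formalize the statement for an
arbitrary multiplicatively closed subset `U` of `A^{(n)}` (this is a
generalization covering each concrete `U_{n,r}`).  For `φ ∈ U_{n,r}`:
`φ ∈ Z^ℓ_{B^{(n)}}(U_{n,r})` iff for every `b^{(n-1)} ∈ B^{(n-1)}` the functional
`b^{(n-1)} φ : b^{(n)} ↦ ⟨b^{(n-1)}, φ b^{(n)}⟩` on `B^{(n)}` lies in the
canonical image of `B^{(n-1)}` in `B^{(n+1)}` (equivalently, is weak-star
continuous). -/
theorem stmt0
    (A B : Type) [NonUnitalNormedRing A] [NormedSpace ℝ A] [IsScalarTower ℝ A A]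
    [SMulCommClass ℝ A A] [CompleteSpace A]
    [NormedAddCommGroup B] [NormedSpace ℝ B] [CompleteSpace B]
    (πl : A →L[ℝ] B →L[ℝ] B) (πr : B →L[ℝ] A →L[ℝ] B)
    (hπl : ∀ (a a' : A) (b : B), πl (a * a') b = πl a (πl a' b))
    (hπr : ∀ (b : B) (a a' : A), πr b (a * a') = πr (πr b a) a')
    (hπlr : ∀ (a : A) (b : B) (a' : A), πr (πl a b) a' = πl a (πr b a'))
    (j r : ℕ) (hr : r ≤ j + 1)
    (U : Set (Ad A (j + 1)))
    (hUmul : ∀ x ∈ U, ∀ y ∈ U, mulA A (j + 1) x y ∈ U)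
    (φ : Ad A (j + 1)) (hφ : φ ∈ U) :
    (φ ∈ U ∧ MemZlBA A B πl j φ) ↔
      ∀ bm : ((BB.of B).diter j).dual.carrier,
        ∃ bm' : ((BB.of B).diter j).dual.carrier,
          BB.incl ((BB.of B).diter j).dual bm' =
            (BB.incl ((BB.of B).diter j).dual bm).comp (actL A B πl (j + 1) φ) :=
  stmt0_general A B πl j U φ hφ
end
end

section
/- Let A be a Banach algebra, B a Banach A-bimodule, n ≥ 2 an even integer, and 0 ≤ r ≤ n/2. If φ ∈ Z^ℓ_{B^(n)}(U_{n,r}), then a^(n-2)φ ∈ Z^ℓ_{B^(n)}(A^(n)) for every a^(n-2) ∈ A^(n-2), where a^(n-2)φ is the product of a^(n-2) (canonically embedded in A^(n)) with φ in A^(n). -/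
/-!
Common infrastructure for formalizing "Topological centers of the n-th dual of
module actions" (Haghnejad Azar, Riazi).

We work over `ℝ`.  A Banach algebra is a complete `NonUnitalNormedRing` which is
a normed `ℝ`-algebra; a Banach `A`-bimodule `B` is given by two continuous
bilinear module actions `πl : A →L B →L B`, `πr : B →L A →L B` satisfying the
usual associativity identities.

`BB` bundles a normed `ℝ`-space.  `BB.dual` is the topological dual,
`BB.bst` is the Arens adjoint `m ↦ m^*` of a bounded bilinear map
(`⟨m^*(z',x), y⟩ = ⟨z', m(x,y)⟩`), `BB.arens m = m^{***}` is the first Arens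
extension, `BB.diter E k` is the `2k`-th dual of `E`, and `BB.iterBil m k` is
the `k`-fold iterated first Arens extension of `m` acting on `2k`-th duals.

Even integers `n ≥ 0` (resp. `n ≥ 2`) are represented as `n = 2*k`
(resp. `n = 2*(j+1)`), so that `A^{(n)}` is `Ad A k`, `A^{(n+1)}` is
`((BB.of A).diter k).dual.carrier`, etc.

Weak-star and weak convergence of nets are expressed through filters
(`wsTendsto`, `wTendsto`), and the relevant topological centers and `wap`
spaces become the predicates `MemZlBA`, `MemZlAB`, `MemWapL` below.
-/

noncomputable section

open ContinuousLinearMap Filter Topology Bornology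

/-!
Multiplication by the canonical image of `a ∈ A^{(n-2)}` on `B^{(n)}` is the adjoint of
`b' ↦ b' · a` on `B^{(n-1)}`, hence weak-star continuous; and by associativity of the
iterated Arens extensions, the left topological center is closed under the Arens product.
-/

namespace BB

lemma wsTendsto_arens_incl {E F G : BB} (m : Bil E F G) (x : E.carrier) {ι : Type}
    {l : Filter ι} {y : ι → F.dual.dual.carrier} {y₀ : F.dual.dual.carrier}
    (hy : wsTendsto (E := F.dual) l y y₀) :
    wsTendsto (E := G.dual) l (fun i => arens m (incl E x) (y i)) (arens m (incl E x) y₀) :=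
  fun z => hy (bst m z x)

lemma arens_assoc {E F : BB} (p : Bil E E E) (m : Bil E F F)
    (h : ∀ a a' b, m (p a a') b = m a (m a' b))
    (a a' : E.dual.dual.carrier) (b : F.dual.dual.carrier) :
    arens m (arens p a a') b = arens m a (arens m a' b) := by
  have h₁ : ∀ (f : F.dual.carrier) (x x' : E.carrier),
      bst m f (p x x') = bst m (bst m f x) x' := fun f x x' => by
    ext y
    exact congrArg f (h x x' y)
  have h₂ : ∀ (f : F.dual.carrier) (x : E.carrier),
      bst p (bst (bst m) b f) x = bst (bst m) b (bst m f x) := fun f x => by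
    ext x'
    exact congrArg b (h₁ f x x')
  have h₃ : ∀ f : F.dual.carrier,
      bst (bst p) a' (bst (bst m) b f) = bst (bst m) (arens m a' b) f := fun f => by
    ext x
    exact congrArg a' (h₂ f x)
  ext f
  exact congrArg a (h₃ f)

lemma iterBil_assoc {E F : BB} (p : Bil E E E) (m : Bil E F F)
    (h : ∀ a a' b, m (p a a') b = m a (m a' b)) (k : ℕ)
    (a a' : (E.diter k).carrier) (b : (F.diter k).carrier) :
    iterBil m k (iterBil p k a a') b = iterBil m k a (iterBil m k a' b) := by
  induction k with
  | zero => exact h a a' b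
  | succ k ih => exact arens_assoc (iterBil p k) (iterBil m k) ih a a' b

end BB

section LeftTopologicalCenter

variable {A B : Type} [NonUnitalNormedRing A] [NormedSpace ℝ A] [NormedAddCommGroup B]
  [NormedSpace ℝ B] {πl : A →L[ℝ] B →L[ℝ] B}

lemma memZlBA_incl (k : ℕ) (a : Ad A k) :
    MemZlBA A B πl k (BB.incl ((BB.of A).diter k) a) :=
  fun _ _ _ _ hb => BB.wsTendsto_arens_incl (actL A B πl k) a hb

lemma MemZlBA.mul [IsScalarTower ℝ A A] [SMulCommClass ℝ A A]
    (hπl : ∀ (a a' : A) (b : B), πl (a * a') b = πl a (πl a' b))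
    {k : ℕ} {x y : Ad A (k + 1)} (hx : MemZlBA A B πl k x) (hy : MemZlBA A B πl k y) :
    MemZlBA A B πl k (mulA A (k + 1) x y) := by
  intro ι l hl bα b hb
  simp only [BB.iterBil_assoc (E := BB.of A) (F := BB.of B) (ContinuousLinearMap.mul ℝ A) πl
    hπl (k + 1)]
  exact hx l hl _ _ (hy l hl bα b hb)

end LeftTopologicalCenter

theorem stmt2_general
    (A B : Type) [NonUnitalNormedRing A] [NormedSpace ℝ A] [IsScalarTower ℝ A A]
    [SMulCommClass ℝ A A]
    [NormedAddCommGroup B] [NormedSpace ℝ B]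
    (πl : A →L[ℝ] B →L[ℝ] B)
    (hπl : ∀ (a a' : A) (b : B), πl (a * a') b = πl a (πl a' b))
    (j : ℕ)
    (φ : Ad A (j + 1))
    (hZ : MemZlBA A B πl j φ) :
    ∀ a : Ad A j,
      MemZlBA A B πl j (mulA A (j + 1) (BB.incl ((BB.of A).diter j) a) φ) :=
  fun a => MemZlBA.mul hπl (memZlBA_incl j a) hZ

/-- (`n = 2*(j+1) ≥ 2` even, `0 ≤ r ≤ n/2 = j+1`; as in
Statement 0, the subalgebra `U_{n,r}` of `A^{(n)}` is abstracted into an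
arbitrary multiplicatively closed subset `U` of `A^{(n)}`.)  If
`φ ∈ Z^ℓ_{B^{(n)}}(U_{n,r})` then for every `a^{(n-2)} ∈ A^{(n-2)}` the product
`a^{(n-2)} φ` (the first Arens product in `A^{(n)}` of the canonical image of
`a^{(n-2)}` with `φ`) lies in `Z^ℓ_{B^{(n)}}(A^{(n)})`. -/
theorem stmt2
    (A B : Type) [NonUnitalNormedRing A] [NormedSpace ℝ A] [IsScalarTower ℝ A A]
    [SMulCommClass ℝ A A] [CompleteSpace A]
    [NormedAddCommGroup B] [NormedSpace ℝ B] [CompleteSpace B]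
    (πl : A →L[ℝ] B →L[ℝ] B) (πr : B →L[ℝ] A →L[ℝ] B)
    (hπl : ∀ (a a' : A) (b : B), πl (a * a') b = πl a (πl a' b))
    (hπr : ∀ (b : B) (a a' : A), πr b (a * a') = πr (πr b a) a')
    (hπlr : ∀ (a : A) (b : B) (a' : A), πr (πl a b) a' = πl a (πr b a'))
    (j r : ℕ) (hr : r ≤ j + 1)
    (U : Set (Ad A (j + 1)))
    (hUmul : ∀ x ∈ U, ∀ y ∈ U, mulA A (j + 1) x y ∈ U)
    (φ : Ad A (j + 1)) (hφ : φ ∈ U)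
    (hZ : MemZlBA A B πl j φ) :
    ∀ a : Ad A j,
      MemZlBA A B πl j (mulA A (j + 1) (BB.incl ((BB.of A).diter j) a) φ) :=
  stmt2_general A B πl hπl j φ hZ
end
end

section
/- Let A be a Banach algebra, B a Banach A-bimodule, and n ≥ 0 an even integer such that every bounded subset of B^(n) is relatively weakly compact (equivalently, the closed unit ball of B^(n) is weakly compact). Suppose (e_α^(n)) is a bounded net in A^(n) with e_α^(n)b^(n) → b^(n) in norm for every b^(n) ∈ B^(n) (a bounded left approximate identity for B^(n)), and that e_α^(n)B^(n+2) ⊆ B^(n) for every α, where B^(n) is canonically embedded in B^(n+2). Then B is reflexive. -/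
/-!
Common infrastructure for formalizing "Topological centers of the n-th dual of
module actions" (Haghnejad Azar, Riazi).

We work over `ℝ`.  A Banach algebra is a complete `NonUnitalNormedRing` which is
a normed `ℝ`-algebra; a Banach `A`-bimodule `B` is given by two continuous
bilinear module actions `πl : A →L B →L B`, `πr : B →L A →L B` satisfying the
usual associativity identities.

`BB` bundles a normed `ℝ`-space.  `BB.dual` is the topological dual,
`BB.bst` is the Arens adjoint `m ↦ m^*` of a bounded bilinear map
(`⟨m^*(z',x), y⟩ = ⟨z', m(x,y)⟩`), `BB.arens m = m^{***}` is the first Arens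
extension, `BB.diter E k` is the `2k`-th dual of `E`, and `BB.iterBil m k` is
the `k`-fold iterated first Arens extension of `m` acting on `2k`-th duals.

Even integers `n ≥ 0` (resp. `n ≥ 2`) are represented as `n = 2*k`
(resp. `n = 2*(j+1)`), so that `A^{(n)}` is `Ad A k`, `A^{(n+1)}` is
`((BB.of A).diter k).dual.carrier`, etc.

Weak-star and weak convergence of nets are expressed through filters
(`wsTendsto`, `wTendsto`), and the relevant topological centers and `wap`
spaces become the predicates `MemZlBA`, `MemZlAB`, `MemWapL` below.
-/

noncomputable section

open ContinuousLinearMap Filter Topology Bornology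

/-!
Kakutani's criterion: if the closed unit ball of `X` is weakly compact, its image in `X''` is
weak-star compact, hence weak-star closed and convex. A functional `F` with `‖F‖ ≤ 1` outside that
image would be separated from it by a weak-star continuous functional on `X''`, i.e. by some
`φ ∈ X'`, putting `F φ` above `sup {φ x | ‖x‖ ≤ 1} = ‖φ‖ ≥ F φ`. So `B^(n)` is reflexive.
Reflexivity descends from `X''` to a Banach space `X`: the range of `X` in `X''` is closed, and a
functional in `X'''` vanishing on it comes from some `φ ∈ X'`, which must be `0`. Iterating this
down the even duals shows that `B` is reflexive.
-/

open NormedSpace Metric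

instance WeakDual.instLocallyConvexSpace (X : Type*) [NormedAddCommGroup X] [NormedSpace ℝ X] :
    LocallyConvexSpace ℝ (WeakDual ℝ X) :=
  WeakBilin.locallyConvexSpace

theorem eq_zero_of_forall_mul_lt {α : Type*} [Field α] [LinearOrder α] [IsStrictOrderedRing α]
    {a u : α} (h : ∀ t : α, t * a < u) : a = 0 := by
  by_contra ha
  simpa [div_mul_cancel₀ _ ha] using h (u / a)

section Reflexivity

variable {E : Type*} [NormedAddCommGroup E] [NormedSpace ℝ E]

theorem StrongDual.norm_le_of_forall_norm_le_one_apply_lt {φ : StrongDual ℝ E} {u : ℝ}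
    (h : ∀ x, ‖x‖ ≤ 1 → φ x < u) : ‖φ‖ ≤ u := by
  have hu : 0 ≤ u := by simpa using (h 0 (by simp)).le
  refine ContinuousLinearMap.opNorm_le_of_unit_norm hu fun x hx => abs_le.2 ⟨?_, (h x hx.le).le⟩
  have := h (-x) (by simp [hx])
  rw [map_neg] at this
  linarith

theorem mem_range_inclusionInDoubleDual_of_norm_le_one
    (hE : IsCompact (closure (toWeakSpace ℝ E '' closedBall 0 1)))
    {F : StrongDual ℝ (StrongDual ℝ E)} (hF : ‖F‖ ≤ 1) :
    F ∈ Set.range (inclusionInDoubleDual ℝ E) := by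
  set K := closure (toWeakSpace ℝ E '' closedBall 0 1)
  set J := inclusionInDoubleDualWeak ℝ E
  have hconv : Convex ℝ (J '' K) :=
    ((convex_closedBall (0 : E) 1).linear_image (toWeakSpace ℝ E).toLinearMap).closure.linear_image
      J.toLinearMap
  have hclosed : IsClosed (J '' K) := (hE.image J.continuous).isClosed
  by_cases hFK : StrongDual.toWeakDual F ∈ J '' K
  · obtain ⟨y, -, hy⟩ := hFK
    exact ⟨(toWeakSpace ℝ E).symm y, StrongDual.toWeakDual.injective hy⟩
  obtain ⟨f, u, hfK, huF⟩ := geometric_hahn_banach_closed_point hconv hclosed hFK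
  obtain ⟨φ, rfl⟩ := LinearMap.dualEmbedding_surjective _ f
  have hφ : ‖φ‖ ≤ u := StrongDual.norm_le_of_forall_norm_le_one_apply_lt fun x hx =>
    hfK _ ⟨_, subset_closure ⟨x, by simpa using hx, rfl⟩, rfl⟩
  have hFφ : F φ ≤ u := calc
    F φ ≤ ‖F‖ * ‖φ‖ := (le_abs_self _).trans (F.le_opNorm φ)
    _ ≤ 1 * u := by gcongr
    _ = u := one_mul u
  exact absurd huF hFφ.not_gt

theorem surjective_inclusionInDoubleDual_of_isCompact_closure_closedBall
    (hE : IsCompact (closure (toWeakSpace ℝ E '' closedBall 0 1))) :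
    Function.Surjective (inclusionInDoubleDual ℝ E) := by
  intro F
  set c : ℝ := ‖F‖ + 1
  have hc : 0 < c := by positivity
  obtain ⟨x, hx⟩ := mem_range_inclusionInDoubleDual_of_norm_le_one hE (F := c⁻¹ • F) <|
    calc ‖c⁻¹ • F‖ ≤ ‖c⁻¹‖ * ‖F‖ := ContinuousLinearMap.opNorm_smul_le _ _
      _ = ‖F‖ / c := by rw [norm_inv, Real.norm_of_nonneg hc.le, inv_mul_eq_div]
      _ ≤ 1 := (div_le_one hc).2 (by linarith)
  exact ⟨c • x, by rw [map_smul, hx, smul_inv_smul₀ hc.ne']⟩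

theorem surjective_inclusionInDoubleDual_of_surjective_dual [CompleteSpace E]
    (h : Function.Surjective (inclusionInDoubleDual ℝ (StrongDual ℝ E))) :
    Function.Surjective (inclusionInDoubleDual ℝ E) := by
  intro F
  by_contra hF
  set R := Set.range (inclusionInDoubleDual ℝ E)
  have hclosed : IsClosed R :=
    (inclusionInDoubleDualLi ℝ (E := E)).isometry.isUniformInducing.isComplete_range.isClosed
  have hconv : Convex ℝ R := (LinearMap.range (inclusionInDoubleDual ℝ E).toLinearMap).convex
  obtain ⟨f, u, hfR, huF⟩ := geometric_hahn_banach_closed_point hconv hclosed hF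
  obtain ⟨φ, rfl⟩ := h f
  have hφ : φ = 0 := ContinuousLinearMap.ext fun x => eq_zero_of_forall_mul_lt fun t => by
    simpa using hfR _ ⟨t • x, rfl⟩
  have hu := hfR 0 ⟨0, map_zero _⟩
  simp only [hφ, map_zero, zero_apply] at hu huF
  linarith

end Reflexivity

instance BB.completeSpace_diter (E : BB) [CompleteSpace E.carrier] :
    ∀ k, CompleteSpace (E.diter k).carrier
  | 0 => ‹_›
  | _ + 1 => inferInstanceAs (CompleteSpace (StrongDual ℝ (StrongDual ℝ _)))

theorem BB.surjective_incl_of_surjective_incl_diter (E : BB) [CompleteSpace E.carrier] :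
    ∀ k, Function.Surjective (BB.incl (E.diter k)) → Function.Surjective (BB.incl E)
  | 0, h => h
  | k + 1, h => BB.surjective_incl_of_surjective_incl_diter E k <|
      surjective_inclusionInDoubleDual_of_surjective_dual <|
        surjective_inclusionInDoubleDual_of_surjective_dual h

theorem stmt3_general
    (B : Type)
    [NormedAddCommGroup B] [NormedSpace ℝ B] [CompleteSpace B]
    (k : ℕ)
    (hwc : ∀ s : Set (Bd B k), Bornology.IsBounded s → RelWeaklyCompact (E := (BB.of B).diter k) s) :
    Function.Surjective (BB.incl (BB.of B)) :=
  BB.surjective_incl_of_surjective_incl_diter (BB.of B) k <|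
    surjective_inclusionInDoubleDual_of_isCompact_closure_closedBall (hwc _ isBounded_closedBall)

/-- (`n = 2*k ≥ 0` even.)  Suppose every bounded subset of
`B^{(n)}` is relatively weakly compact, `(e_α)` is a bounded net in `A^{(n)}`
which is a bounded left approximate identity for `B^{(n)}` (in norm), and
`e_α B^{(n+2)} ⊆ B^{(n)}` (with `B^{(n)}` canonically embedded in `B^{(n+2)}`)
for every `α`.  Then `B` is reflexive. -/
theorem stmt3
    (A B : Type) [NonUnitalNormedRing A] [NormedSpace ℝ A] [IsScalarTower ℝ A A]
    [SMulCommClass ℝ A A] [CompleteSpace A]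
    [NormedAddCommGroup B] [NormedSpace ℝ B] [CompleteSpace B]
    (πl : A →L[ℝ] B →L[ℝ] B) (πr : B →L[ℝ] A →L[ℝ] B)
    (hπl : ∀ (a a' : A) (b : B), πl (a * a') b = πl a (πl a' b))
    (hπr : ∀ (b : B) (a a' : A), πr b (a * a') = πr (πr b a) a')
    (hπlr : ∀ (a : A) (b : B) (a' : A), πr (πl a b) a' = πl a (πr b a'))
    (k : ℕ)
    (hwc : ∀ s : Set (Bd B k), Bornology.IsBounded s → RelWeaklyCompact (E := (BB.of B).diter k) s)
    {ι : Type} (l : Filter ι) (hl : l.NeBot) (e : ι → Ad A k)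
    (hbd : Bornology.IsBounded (Set.range e))
    (hlai : ∀ b : Bd B k, Filter.Tendsto (fun i => actL A B πl k (e i) b) l (nhds b))
    (hsub : ∀ (i : ι) (b2 : Bd B (k + 1)), ∃ b0 : Bd B k,
        actL A B πl (k + 1) (BB.incl ((BB.of A).diter k) (e i)) b2 =
          BB.incl ((BB.of B).diter k) b0) :
    Function.Surjective (BB.incl (BB.of B)) :=
  stmt3_general B k hwc
end
end

section
/- Let A be a Banach algebra, B a Banach A-bimodule, and n ≥ 2 an even integer. Suppose there is a_0^(n-2) ∈ A^(n-2) with A^(n) = a_0^(n-2)A^(n) (product of the canonical image of a_0^(n-2) in A^(n) with A^(n) in the first Arens product) such that a_0^(n-2) has the Rw*w-property: for every net (x_α) in A^(n-1) = (A^(n-2))*, if x_α a_0^(n-2) → 0 in the weak* topology of A^(n-1), then x_α a_0^(n-2) → 0 weakly in A^(n-1), where ⟨x a, c⟩ = ⟨x, ac⟩ for x ∈ A^(n-1), a, c ∈ A^(n-2). Then Z^ℓ_{B^(n)}(A^(n)) = A^(n). -/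
/-!
Common infrastructure for formalizing "Topological centers of the n-th dual of
module actions" (Haghnejad Azar, Riazi).

We work over `ℝ`.  A Banach algebra is a complete `NonUnitalNormedRing` which is
a normed `ℝ`-algebra; a Banach `A`-bimodule `B` is given by two continuous
bilinear module actions `πl : A →L B →L B`, `πr : B →L A →L B` satisfying the
usual associativity identities.

`BB` bundles a normed `ℝ`-space.  `BB.dual` is the topological dual,
`BB.bst` is the Arens adjoint `m ↦ m^*` of a bounded bilinear map
(`⟨m^*(z',x), y⟩ = ⟨z', m(x,y)⟩`), `BB.arens m = m^{***}` is the first Arens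
extension, `BB.diter E k` is the `2k`-th dual of `E`, and `BB.iterBil m k` is
the `k`-fold iterated first Arens extension of `m` acting on `2k`-th duals.

Even integers `n ≥ 0` (resp. `n ≥ 2`) are represented as `n = 2*k`
(resp. `n = 2*(j+1)`), so that `A^{(n)}` is `Ad A k`, `A^{(n+1)}` is
`((BB.of A).diter k).dual.carrier`, etc.

Weak-star and weak convergence of nets are expressed through filters
(`wsTendsto`, `wTendsto`), and the relevant topological centers and `wap`
spaces become the predicates `MemZlBA`, `MemZlAB`, `MemWapL` below.
-/

noncomputable section

open ContinuousLinearMap Filter Topology Bornology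

/-!
Write `a = a₀ x` with `x ∈ A^{(n)}`. Unwinding the first Arens products gives
`⟨a b, ψ⟩ = ⟨x, φ_b a₀⟩`, where `φ_b ∈ A^{(n-1)}` depends weak*-continuously on `b ∈ B^{(n)}`.
So if `b_α → b` weak*, then `φ_{b_α} a₀ → φ_b a₀` weak*, hence weakly by the `Rw*w`-property,
and pairing with `x` gives `⟨a b_α, ψ⟩ → ⟨a b, ψ⟩`.
-/

namespace BB

variable {E F G : BB}

theorem arens_apply (m : Bil E F G) (x : E.dual.dual.carrier) (y : F.dual.dual.carrier)
    (z : G.dual.carrier) : arens m x y z = x (bst (bst m) y z) :=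
  rfl

theorem arens_incl_apply (m : Bil E F G) (a : E.carrier) (y : F.dual.dual.carrier)
    (z : G.dual.carrier) : arens m (E.incl a) y z = y (z.comp (m a)) :=
  rfl

theorem wsTendsto_bst_bst (m : Bil E F G) {ι : Type} {l : Filter ι}
    {yα : ι → F.dual.dual.carrier} {y : F.dual.dual.carrier} (hy : wsTendsto (E := F.dual) l yα y)
    (z : G.dual.carrier) :
    wsTendsto (E := E) l (fun i => bst (bst m) (yα i) z) (bst (bst m) y z) :=
  fun x => hy (bst m z x)

/-- The `Rw*w`-property; `(z_α).comp (m a₀)` is the paper's `z_α a₀`. -/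
def HasRwwProperty (m : Bil E F G) (a₀ : E.carrier) : Prop :=
  ∀ {ι : Type} (l : Filter ι), l.NeBot →
    ∀ zα : ι → G.dual.carrier,
      wsTendsto (E := F) l (fun i => (zα i).comp (m a₀)) 0 →
      wTendsto (E := F.dual) l (fun i => (zα i).comp (m a₀)) 0

theorem HasRwwProperty.wTendsto_comp {m : Bil E F G} {a₀ : E.carrier}
    (h : HasRwwProperty m a₀) {ι : Type} {l : Filter ι} [l.NeBot]
    {zα : ι → G.dual.carrier} {z : G.dual.carrier} (hz : wsTendsto (E := G) l zα z) :
    wTendsto (E := F.dual) l (fun i => (zα i).comp (m a₀)) (z.comp (m a₀)) := by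
  have hdiff : wsTendsto (E := F) l (fun i => (zα i - z).comp (m a₀)) 0 := by
    intro y
    simpa using (hz (m a₀ y)).sub_const (z (m a₀ y))
  intro x
  simpa [ContinuousLinearMap.sub_comp] using
    ((h l ‹_› (fun i => zα i - z) hdiff) x).add_const (x (z.comp (m a₀)))

theorem wsTendsto_arens_incl_mul {H : BB} (m : Bil E F G) (p : Bil H E E) {a₀ : H.carrier}
    (h : HasRwwProperty p a₀) (x : E.dual.dual.carrier) {ι : Type} {l : Filter ι} [l.NeBot]
    {yα : ι → F.dual.dual.carrier} {y : F.dual.dual.carrier}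
    (hy : wsTendsto (E := F.dual) l yα y) :
    wsTendsto (E := G.dual) l (fun i => arens m (arens p (H.incl a₀) x) (yα i))
      (arens m (arens p (H.incl a₀) x) y) := by
  intro z
  have hunfold : ∀ y' : F.dual.dual.carrier,
      arens m (arens p (H.incl a₀) x) y' z = x ((bst (bst m) y' z).comp (p a₀)) := fun y' => by
    rw [arens_apply, arens_incl_apply]
  simp only [hunfold]
  exact h.wTendsto_comp (wsTendsto_bst_bst m hy z) x

end BB

theorem stmt12_general
    (A B : Type) [NonUnitalNormedRing A] [NormedSpace ℝ A] [IsScalarTower ℝ A A]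
    [SMulCommClass ℝ A A]
    [NormedAddCommGroup B] [NormedSpace ℝ B]
    (πl : A →L[ℝ] B →L[ℝ] B)
    (j : ℕ) (a0 : Ad A j)
    (hfact : ∀ z : Ad A (j + 1), ∃ x : Ad A (j + 1),
        z = mulA A (j + 1) (BB.incl ((BB.of A).diter j) a0) x)
    (hRww : ∀ {ι : Type} (l : Filter ι), l.NeBot →
        ∀ xα : ι → ((BB.of A).diter j).dual.carrier,
          wsTendsto (E := (BB.of A).diter j) l (fun i => (xα i).comp (mulA A j a0)) 0 →
          wTendsto (E := ((BB.of A).diter j).dual) l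
            (fun i => (xα i).comp (mulA A j a0)) 0) :
    ∀ a : Ad A (j + 1), MemZlBA A B πl j a := by
  intro a ι l hl bα b hb
  obtain ⟨x, rfl⟩ := hfact a
  exact BB.wsTendsto_arens_incl_mul (actL A B πl j) (mulA A j) hRww x hb

/-- (`n = 2*(j+1) ≥ 2` even.)  If `A^{(n)} = a₀^{(n-2)} A^{(n)}`
for some `a₀^{(n-2)} ∈ A^{(n-2)}` having the `Rw*w`-property (for every net
`(x_α)` in `A^{(n-1)}`, `x_α a₀ → 0` weak-star implies `x_α a₀ → 0` weakly,
where `⟨x a, c⟩ = ⟨x, a c⟩`), then `Z^ℓ_{B^{(n)}}(A^{(n)}) = A^{(n)}`. -/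
theorem stmt12
    (A B : Type) [NonUnitalNormedRing A] [NormedSpace ℝ A] [IsScalarTower ℝ A A]
    [SMulCommClass ℝ A A] [CompleteSpace A]
    [NormedAddCommGroup B] [NormedSpace ℝ B] [CompleteSpace B]
    (πl : A →L[ℝ] B →L[ℝ] B) (πr : B →L[ℝ] A →L[ℝ] B)
    (hπl : ∀ (a a' : A) (b : B), πl (a * a') b = πl a (πl a' b))
    (hπr : ∀ (b : B) (a a' : A), πr b (a * a') = πr (πr b a) a')
    (hπlr : ∀ (a : A) (b : B) (a' : A), πr (πl a b) a' = πl a (πr b a'))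
    (j : ℕ) (a0 : Ad A j)
    (hfact : ∀ z : Ad A (j + 1), ∃ x : Ad A (j + 1),
        z = mulA A (j + 1) (BB.incl ((BB.of A).diter j) a0) x)
    (hRww : ∀ {ι : Type} (l : Filter ι), l.NeBot →
        ∀ xα : ι → ((BB.of A).diter j).dual.carrier,
          wsTendsto (E := (BB.of A).diter j) l (fun i => (xα i).comp (mulA A j a0)) 0 →
          wTendsto (E := ((BB.of A).diter j).dual) l
            (fun i => (xα i).comp (mulA A j a0)) 0) :
    ∀ a : Ad A (j + 1), MemZlBA A B πl j a :=
  stmt12_general A B πl j a0 hfact hRww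
end
end

section
/- Let A be a Banach algebra, B a Banach A-bimodule, and n ≥ 2 an even integer. Suppose there is a_0^(n-2) ∈ A^(n-2) with B^(n) = B^(n)a_0^(n-2) (right module action of the canonical image of a_0^(n-2) in A^(n) on B^(n)) such that a_0^(n-2) has the Lw*w-property with respect to B: for every net (y_α) in B^(n-1) = (B^(n-2))*, if a_0^(n-2)y_α → 0 in the weak* topology of B^(n-1), then a_0^(n-2)y_α → 0 weakly in B^(n-1), where the left action of A^(n-2) on B^(n-1) is given by ⟨a y, b⟩ = ⟨y, ba⟩ for y ∈ B^(n-1), a ∈ A^(n-2), b ∈ B^(n-2). Then Z^ℓ_{A^(n)}(B^(n)) = B^(n). -/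
/-!
Common infrastructure for formalizing "Topological centers of the n-th dual of
module actions" (Haghnejad Azar, Riazi).

We work over `ℝ`.  A Banach algebra is a complete `NonUnitalNormedRing` which is
a normed `ℝ`-algebra; a Banach `A`-bimodule `B` is given by two continuous
bilinear module actions `πl : A →L B →L B`, `πr : B →L A →L B` satisfying the
usual associativity identities.

`BB` bundles a normed `ℝ`-space.  `BB.dual` is the topological dual,
`BB.bst` is the Arens adjoint `m ↦ m^*` of a bounded bilinear map
(`⟨m^*(z',x), y⟩ = ⟨z', m(x,y)⟩`), `BB.arens m = m^{***}` is the first Arens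
extension, `BB.diter E k` is the `2k`-th dual of `E`, and `BB.iterBil m k` is
the `k`-fold iterated first Arens extension of `m` acting on `2k`-th duals.

Even integers `n ≥ 0` (resp. `n ≥ 2`) are represented as `n = 2*k`
(resp. `n = 2*(j+1)`), so that `A^{(n)}` is `Ad A k`, `A^{(n+1)}` is
`((BB.of A).diter k).dual.carrier`, etc.

Weak-star and weak convergence of nets are expressed through filters
(`wsTendsto`, `wTendsto`), and the relevant topological centers and `wap`
spaces become the predicates `MemZlBA`, `MemZlAB`, `MemWapL` below.
-/

noncomputable section

open ContinuousLinearMap Filter Topology Bornology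

/-! Write `m` for the action `B^{(n-2)} × A^{(n-2)} → B^{(n-2)}` and, for fixed
`z' ∈ B^{(n+1)}`, put `y_a = m^{**}(a, z') ∈ B^{(n-1)}`.  Unwinding the Arens extensions, for
`b = v a₀` one has `⟨b a, z'⟩ = ⟨v, a₀ y_a⟩`.  If `a_α → a` weak-star in `A^{(n)}`, then
`y_{a_α} → y_a` weak-star, so `a₀ (y_{a_α} - y_a) → 0` weak-star, hence weakly by the
`Lw*w`-property; pairing with `v` gives `b a_α → b a` weak-star. -/

theorem BB.bst_bst_wsTendsto {E F G : BB} (m : BB.Bil E F G) {ι : Type} {l : Filter ι}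
    {yα : ι → F.dual.dual.carrier} {y : F.dual.dual.carrier}
    (h : wsTendsto (E := F.dual) l yα y) (z' : G.dual.carrier) :
    wsTendsto (E := E) l (fun i => BB.bst (BB.bst m) (yα i) z') (BB.bst (BB.bst m) y z') :=
  fun x => h (BB.bst m z' x)

section NetConvergence

variable {E : BB} {ι : Type} {l : Filter ι}

theorem wsTendsto.comp_right {E' : BB} {fα : ι → E'.dual.carrier} {g : E'.dual.carrier}
    (h : wsTendsto (E := E') l fα g) (T : E.carrier →L[ℝ] E'.carrier) :
    wsTendsto (E := E) l (fun i => (fα i).comp T) (g.comp T) :=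
  fun x => h (T x)

theorem wsTendsto_iff_sub_zero {fα : ι → E.dual.carrier} {g : E.dual.carrier} :
    wsTendsto l fα g ↔ wsTendsto l (fun i => fα i - g) 0 := by
  refine forall_congr' fun x => ?_
  simp only [sub_apply, zero_apply]
  exact tendsto_sub_nhds_zero_iff.symm

theorem wTendsto_iff_sub_zero {fα : ι → E.carrier} {g : E.carrier} :
    wTendsto l fα g ↔ wTendsto l (fun i => fα i - g) 0 := by
  refine forall_congr' fun ψ => ?_
  simp only [map_sub, map_zero]
  exact tendsto_sub_nhds_zero_iff.symm

end NetConvergence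

theorem stmt15_general
    (A B : Type) [NonUnitalNormedRing A] [NormedSpace ℝ A] [IsScalarTower ℝ A A]
    [SMulCommClass ℝ A A]
    [NormedAddCommGroup B] [NormedSpace ℝ B]
    (πr : B →L[ℝ] A →L[ℝ] B)
    (j : ℕ) (a0 : Ad A j)
    (hfact : ∀ w : Bd B (j + 1), ∃ v : Bd B (j + 1),
        w = actR A B πr (j + 1) v (BB.incl ((BB.of A).diter j) a0))
    (hLww : ∀ {ι : Type} (l : Filter ι), l.NeBot →
        ∀ yα : ι → ((BB.of B).diter j).dual.carrier,
          wsTendsto (E := (BB.of B).diter j) l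
            (fun i => (yα i).comp ((actR A B πr j).flip a0)) 0 →
          wTendsto (E := ((BB.of B).diter j).dual) l
            (fun i => (yα i).comp ((actR A B πr j).flip a0)) 0) :
    ∀ b : Bd B (j + 1), MemZlAB A B πr j b := by
  intro b ι l hl aα a ha z'
  obtain ⟨v, rfl⟩ := hfact b
  let m := actR A B πr j
  let y : ι → ((BB.of B).diter j).dual.carrier := fun i => BB.bst (BB.bst m) (aα i) z'
  let y₀ : ((BB.of B).diter j).dual.carrier := BB.bst (BB.bst m) a z'
  have hws : wsTendsto l (fun i => (y i - y₀).comp (m.flip a0)) 0 := by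
    simpa only [sub_comp] using
      wsTendsto_iff_sub_zero.1 ((BB.bst_bst_wsTendsto m ha z').comp_right (m.flip a0))
  have hw : wTendsto (E := ((BB.of B).diter j).dual) l
      (fun i => (y i - y₀).comp (m.flip a0)) 0 := hLww l hl (fun i => y i - y₀) hws
  simp only [sub_comp] at hw
  -- `⟨(v a₀) a_α, z'⟩ = ⟨v, a₀ y_{a_α}⟩` holds definitionally
  exact wTendsto_iff_sub_zero.2 hw v

/-- (`n = 2*(j+1) ≥ 2` even.)  If `B^{(n)} = B^{(n)} a₀^{(n-2)}`
for some `a₀^{(n-2)} ∈ A^{(n-2)}` having the `Lw*w`-property with respect to `B`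
(for every net `(y_α)` in `B^{(n-1)}`, `a₀ y_α → 0` weak-star implies
`a₀ y_α → 0` weakly, where `⟨a y, b⟩ = ⟨y, b a⟩`), then
`Z^ℓ_{A^{(n)}}(B^{(n)}) = B^{(n)}`. -/
theorem stmt15
    (A B : Type) [NonUnitalNormedRing A] [NormedSpace ℝ A] [IsScalarTower ℝ A A]
    [SMulCommClass ℝ A A] [CompleteSpace A]
    [NormedAddCommGroup B] [NormedSpace ℝ B] [CompleteSpace B]
    (πl : A →L[ℝ] B →L[ℝ] B) (πr : B →L[ℝ] A →L[ℝ] B)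
    (hπl : ∀ (a a' : A) (b : B), πl (a * a') b = πl a (πl a' b))
    (hπr : ∀ (b : B) (a a' : A), πr b (a * a') = πr (πr b a) a')
    (hπlr : ∀ (a : A) (b : B) (a' : A), πr (πl a b) a' = πl a (πr b a'))
    (j : ℕ) (a0 : Ad A j)
    (hfact : ∀ w : Bd B (j + 1), ∃ v : Bd B (j + 1),
        w = actR A B πr (j + 1) v (BB.incl ((BB.of A).diter j) a0))
    (hLww : ∀ {ι : Type} (l : Filter ι), l.NeBot →
        ∀ yα : ι → ((BB.of B).diter j).dual.carrier,
          wsTendsto (E := (BB.of B).diter j) l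
            (fun i => (yα i).comp ((actR A B πr j).flip a0)) 0 →
          wTendsto (E := ((BB.of B).diter j).dual) l
            (fun i => (yα i).comp ((actR A B πr j).flip a0)) 0) :
    ∀ b : Bd B (j + 1), MemZlAB A B πr j b :=
  stmt15_general A B πr j a0 hfact hLww
end
end

section
/- Let A be a Banach algebra and B a left Banach A-module, and suppose e ∈ A satisfies eb = b for all b ∈ B. If e has the w*w-property with respect to B — in particular, for every net (b'_α) in B*, b'_α e → 0 in the weak* topology of B* implies b'_α e → 0 weakly in B*, where ⟨b' e, b⟩ = ⟨b', eb⟩ — then B is reflexive. -/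
/-!
Common infrastructure for formalizing "Topological centers of the n-th dual of
module actions" (Haghnejad Azar, Riazi).

We work over `ℝ`.  A Banach algebra is a complete `NonUnitalNormedRing` which is
a normed `ℝ`-algebra; a Banach `A`-bimodule `B` is given by two continuous
bilinear module actions `πl : A →L B →L B`, `πr : B →L A →L B` satisfying the
usual associativity identities.

`BB` bundles a normed `ℝ`-space.  `BB.dual` is the topological dual,
`BB.bst` is the Arens adjoint `m ↦ m^*` of a bounded bilinear map
(`⟨m^*(z',x), y⟩ = ⟨z', m(x,y)⟩`), `BB.arens m = m^{***}` is the first Arens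
extension, `BB.diter E k` is the `2k`-th dual of `E`, and `BB.iterBil m k` is
the `k`-fold iterated first Arens extension of `m` acting on `2k`-th duals.

Even integers `n ≥ 0` (resp. `n ≥ 2`) are represented as `n = 2*k`
(resp. `n = 2*(j+1)`), so that `A^{(n)}` is `Ad A k`, `A^{(n+1)}` is
`((BB.of A).diter k).dual.carrier`, etc.

Weak-star and weak convergence of nets are expressed through filters
(`wsTendsto`, `wTendsto`), and the relevant topological centers and `wap`
spaces become the predicates `MemZlBA`, `MemZlAB`, `MemWapL` below.
-/

noncomputable section

open ContinuousLinearMap Filter Topology Bornology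

/-! Since `e` acts as the identity on `B`, `b' e = b'` for every `b' ∈ B*`, so the `w*w`-property
says that weak*-null nets in `B*` are weakly null. Applied to the weak*-neighbourhood filter of `0`,
this makes every `Φ ∈ B**` weak*-continuous, and weak*-continuous functionals on `B*` are
evaluations at points of `B`. -/

theorem WeakDual.exists_apply_eq_of_continuous {𝕜 E : Type*} [NontriviallyNormedField 𝕜]
    [AddCommGroup E] [TopologicalSpace E] [Module 𝕜 E] (Φ : WeakDual 𝕜 E →L[𝕜] 𝕜) :
    ∃ x : E, ∀ ψ : WeakDual 𝕜 E, Φ ψ = ψ x := by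
  obtain ⟨x, hx⟩ := LinearMap.dualEmbedding_surjective (topDualPairing 𝕜 E) Φ
  exact ⟨x, fun ψ => (DFunLike.congr_fun hx ψ).symm⟩

theorem BB.incl_surjective_of_wsTendsto_zero_imp_wTendsto_zero {E : BB}
    (h : ∀ {ι : Type} (l : Filter ι), l.NeBot → ∀ f : ι → E.dual.carrier,
      wsTendsto l f 0 → wTendsto (E := E.dual) l f 0) :
    Function.Surjective (BB.incl E) := by
  intro Φ
  let Φw : WeakDual ℝ E.carrier →ₗ[ℝ] ℝ := Φ.toLinearMap
  have hΦw : Tendsto (fun ψ : WeakDual ℝ E.carrier => Φ ψ) (𝓝 0) (𝓝 0) := by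
    simpa using h (𝓝 (0 : WeakDual ℝ E.carrier)) inferInstance id
      (fun x => (WeakDual.eval_continuous x).tendsto 0) Φ
  obtain ⟨x, hx⟩ :=
    WeakDual.exists_apply_eq_of_continuous ⟨Φw, continuous_of_tendsto_nhds_zero Φw hΦw⟩
  exact ⟨x, ContinuousLinearMap.ext fun ψ => (hx ψ).symm⟩

theorem stmt17_general (A B : Type) [NonUnitalNormedRing A] [NormedSpace ℝ A]
    [NormedAddCommGroup B] [NormedSpace ℝ B]
    (πl : A →L[ℝ] B →L[ℝ] B)
    (e : A) (he : ∀ b : B, πl e b = b)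
    (hww : ∀ {ι : Type} (l : Filter ι), l.NeBot → ∀ b'α : ι → (B →L[ℝ] ℝ),
        wsTendsto (E := BB.of B) l (fun i => (b'α i).comp (πl e)) 0 →
        wTendsto (E := (BB.of B).dual) l (fun i => (b'α i).comp (πl e)) 0) :
    Function.Surjective (BB.incl (BB.of B)) := by
  have hcomp (ψ : B →L[ℝ] ℝ) : ψ.comp (πl e) = ψ := by
    ext b
    simp [he]
  simp only [hcomp] at hww
  exact BB.incl_surjective_of_wsTendsto_zero_imp_wTendsto_zero hww

/-- Let `B` be a left Banach `A`-module and `e ∈ A` with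
`e b = b` for all `b ∈ B`.  If `e` has the `w*w`-property with respect to `B`
(in particular: for every net `(b'_α)` in `B^*`, `b'_α e → 0` weak-star implies
`b'_α e → 0` weakly, where `⟨b' e, b⟩ = ⟨b', e b⟩`), then `B` is reflexive. -/
theorem stmt17 (A B : Type) [NonUnitalNormedRing A] [NormedSpace ℝ A] [IsScalarTower ℝ A A]
    [SMulCommClass ℝ A A] [CompleteSpace A]
    [NormedAddCommGroup B] [NormedSpace ℝ B] [CompleteSpace B]
    (πl : A →L[ℝ] B →L[ℝ] B)
    (hπl : ∀ (a a' : A) (b : B), πl (a * a') b = πl a (πl a' b))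
    (e : A) (he : ∀ b : B, πl e b = b)
    (hww : ∀ {ι : Type} (l : Filter ι), l.NeBot → ∀ b'α : ι → (B →L[ℝ] ℝ),
        wsTendsto (E := BB.of B) l (fun i => (b'α i).comp (πl e)) 0 →
        wTendsto (E := (BB.of B).dual) l (fun i => (b'α i).comp (πl e)) 0) :
    Function.Surjective (BB.incl (BB.of B)) :=
  stmt17_general A B πl e he hww
end
end
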